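/- Let Λ be the Kronecker algebra over an algebraically closed field k, I ⊆ k, and J ⊆ I. Then there is a short exact sequence of Λ-modules 0 → P(J) → P(I) → S(I∖J) → 0, where S(I∖J) = ⊕_{λ ∈ I∖J} S_λ and S_λ is the simple regular module in the tube indexed by λ (the representation k ⇉ k with maps identity and multiplication by λ). -/

import Mathlib

/-!
Modulo `k[T]`, multiplication by `T` is an endomorphism of `k(T) / k[T]` of which the classes of
the `1/(T - λ)` are eigenvectors with the distinct eigenvalues `λ`, because
`T/(T - λ) = λ/(T - λ) + 1`. As `1 ∈ k[T]`, it follows that `1` and the `1/(T - λ)`, `λ ∈ k`,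
are linearly independent: they form bases of `W(I)` and `V(I)`, and those indexed by `J` span
`W(J)` and `V(J)`. Taking the coefficients of the `1/(T - λ)` with `λ ∈ I \ J` is therefore
onto `S(I \ J)` with kernel `P(J)`, and by the same identity it turns multiplication by `T`
into multiplication by `λ`.
-/

universe u

variable (k : Type u) [Field k]

/-- A representation of the Kronecker quiver `0 ⇉ 1`: two vector spaces and two
linear maps. -/
structure KronRep where
  V : Type u
  W : Type u
  [addV : AddCommGroup V]
  [addW : AddCommGroup W]
  [modV : Module k V]
  [modW : Module k W]
  a : V →ₗ[k] W
  b : V →ₗ[k] W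

attribute [instance] KronRep.addV KronRep.addW KronRep.modV KronRep.modW

variable {k}

/-- A morphism of Kronecker representations. -/
@[ext]
structure KronHom (M N : KronRep k) where
  φ : M.V →ₗ[k] N.V
  ψ : M.W →ₗ[k] N.W
  comm_a : N.a.comp φ = ψ.comp M.a
  comm_b : N.b.comp φ = ψ.comp M.b

/-- The zero morphism. -/
def KronHom.zero (M N : KronRep k) : KronHom M N :=
  ⟨0, 0, by simp, by simp⟩

/-- The identity morphism. -/
def KronHom.id (M : KronRep k) : KronHom M M :=
  ⟨LinearMap.id, LinearMap.id, by simp, by simp⟩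

/-- `M` is the zero representation. -/
def KronRep.IsZeroRep (M : KronRep k) : Prop :=
  Subsingleton M.V ∧ Subsingleton M.W

/-- `M` is indecomposable: it is nonzero and its endomorphism ring has no nontrivial
idempotents. -/
def KronRep.Indecomposable (M : KronRep k) : Prop :=
  ¬ M.IsZeroRep ∧ ∀ e : KronHom M M,
    e.φ.comp e.φ = e.φ → e.ψ.comp e.ψ = e.ψ → e = KronHom.zero M M ∨ e = KronHom.id M

/-- For Kronecker representations, the finite-dimensional indecomposable preprojective
modules are exactly the indecomposables of dimension vector `(n, n+1)`. -/
def KronRep.IsPreprojective (M : KronRep k) : Prop :=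
  M.Indecomposable ∧ ∃ n : ℕ, Module.finrank k M.V = n ∧ Module.finrank k M.W = n + 1

variable (k)

/-- The subspace `V(I) ⊆ k(T)` spanned by the elements `1/(T - λ)`, `λ ∈ I`. -/
noncomputable def VI (I : Set k) : Submodule k (RatFunc k) :=
  Submodule.span k ((fun l : k => (RatFunc.X - RatFunc.C l)⁻¹) '' I)

/-- The subspace `V(I) + k·1 ⊆ k(T)`. -/
noncomputable def WI (I : Set k) : Submodule k (RatFunc k) :=
  VI k I ⊔ Submodule.span k {1}

theorem mulX_mem (I : Set k) : ∀ v : RatFunc k, v ∈ VI k I →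
    RatFunc.X * v ∈ WI k I := by
  intro v hv
  induction hv using Submodule.span_induction with
  | mem x hx =>
      obtain ⟨l, hl, rfl⟩ := hx
      have hne : (RatFunc.X - RatFunc.C l : RatFunc k) ≠ 0 := by
        have h1 : (RatFunc.X - RatFunc.C l : RatFunc k)
            = algebraMap (Polynomial k) (RatFunc k) (Polynomial.X - Polynomial.C l) := by
          simp [RatFunc.algebraMap_X, RatFunc.algebraMap_C]
        rw [h1]
        exact RatFunc.algebraMap_ne_zero (Polynomial.X_sub_C_ne_zero l)
      have key : RatFunc.X * (RatFunc.X - RatFunc.C l)⁻¹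
          = l • (RatFunc.X - RatFunc.C l)⁻¹ + 1 := by
        rw [Algebra.smul_def]
        field_simp
        rw [RatFunc.algebraMap_eq_C]
        ring
      rw [key]
      refine add_mem ?_ ?_
      · exact Submodule.mem_sup_left (Submodule.smul_mem _ _
          (Submodule.subset_span ⟨l, hl, rfl⟩))
      · exact Submodule.mem_sup_right (Submodule.subset_span rfl)
  | zero => simpa using (WI k I).zero_mem
  | add x y hx hy ihx ihy => simpa [mul_add] using add_mem ihx ihy
  | smul c x hx ih => simpa [Algebra.mul_smul_comm] using (WI k I).smul_mem c ih

/-- Ringel's representation `P(I)`: the subrepresentation `(V(I) ⇉ V(I) + k·1)` of the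
generic representation `(k(T) ⇉ k(T))`, whose maps are the inclusion and
multiplication by `T`. -/
noncomputable def Prep (I : Set k) : KronRep k where
  V := VI k I
  W := WI k I
  a := Submodule.inclusion le_sup_left
  b := LinearMap.codRestrict (WI k I)
    ((LinearMap.mulLeft k (RatFunc.X : RatFunc k)).comp (VI k I).subtype)
    (fun v => mulX_mem k I v v.2)

/-- The direct sum `S(s) = ⊕_{λ ∈ s} S_λ` of the simple regular representations
`S_λ = (k ⇉ k)` with maps `id` and `λ·id`. -/
noncomputable def Srep (s : Set k) : KronRep k where
  V := s →₀ k
  W := s →₀ k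
  a := LinearMap.id
  b := Finsupp.lsum k fun μ : s => (μ : k) • Finsupp.lsingle μ

open Submodule

theorem Finsupp.lsum_smul_lsingle_apply {α R : Type*} [CommSemiring R] (f : α → R)
    (y : α →₀ R) (a : α) :
    (Finsupp.lsum R (fun b => f b • Finsupp.lsingle b) : (α →₀ R) →ₗ[R] α →₀ R) y a
      = f a * y a := by
  rw [Finsupp.lsum_apply, Finsupp.sum_apply, Finsupp.sum_eq_single a]
  · simp
  · intro b _ hb
    simp [hb]
  · simp

theorem Set.image_sdiff_image_sdiff_of_subset {α β : Type*} {f : α → β} (hf : f.Injective)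
    {I J : Set α} (h : J ⊆ I) : f '' I \ f '' (I \ J) = f '' J := by
  rw [← Set.image_sdiff hf, Set.sdiff_sdiff_cancel_left h]

theorem LinearIndependent.notMem_span_of_mkQ {ι R M : Type*} [Ring R] [AddCommGroup M]
    [Module R M] {v : ι → M} {p : Submodule R M} (hv : LinearIndependent R (p.mkQ ∘ v))
    {x : M} (hxp : x ∈ p) (hx : x ≠ 0) : x ∉ span R (Set.range v) := by
  rw [← Finsupp.range_linearCombination]
  rintro ⟨c, rfl⟩
  have hc : c = 0 := by
    apply linearIndependent_iff.1 hv
    rw [← Finsupp.apply_linearCombination, mkQ_apply, Quotient.mk_eq_zero]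
    exact hxp
  simp [hc] at hx

namespace LinearIndependent

variable {ι κ R M : Type*} [Ring R] [AddCommGroup M] [Module R M] {v : ι → M}
  (hv : LinearIndependent R v)

theorem mem_span_image_iff_support_repr_subset {t : Set ι} (x : span R (Set.range v)) :
    (x : M) ∈ span R (v '' t) ↔ ↑(hv.repr x).support ⊆ t := by
  constructor
  · intro hx
    obtain ⟨l, hl, hlx⟩ := (Finsupp.mem_span_image_iff_linearCombination R).1 hx
    rw [hv.repr_eq hlx]
    exact hl
  · intro h
    rw [← hv.linearCombination_repr x]
    exact (Finsupp.mem_span_image_iff_linearCombination R).2 ⟨_, h, rfl⟩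

noncomputable def coordsOn (p : Submodule R M) (hp : p ≤ span R (Set.range v)) {e : κ → ι}
    (he : e.Injective) : p →ₗ[R] κ →₀ R :=
  Finsupp.lcomapDomain e he ∘ₗ hv.repr ∘ₗ Submodule.inclusion hp

variable {p : Submodule R M} (hp : p ≤ span R (Set.range v)) {e : κ → ι} (he : e.Injective)

theorem coordsOn_eq_comapDomain {x : p} {c : ι →₀ R}
    (hc : Finsupp.linearCombination R v c = x) :
    hv.coordsOn p hp he x = c.comapDomain e he.injOn := by
  rw [coordsOn, LinearMap.comp_apply, LinearMap.comp_apply, hv.repr_eq hc]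
  rfl

theorem coordsOn_surjective (h : ∀ j, v (e j) ∈ p) :
    Function.Surjective (hv.coordsOn p hp he) := by
  intro y
  have hy : Finsupp.linearCombination R v (y.mapDomain e) ∈ p := by
    rw [Finsupp.linearCombination_mapDomain, Finsupp.linearCombination_apply]
    exact Submodule.finsuppSum_mem _ _ _ _ fun j _ => p.smul_mem _ (h j)
  exact ⟨⟨_, hy⟩, (hv.coordsOn_eq_comapDomain hp he rfl).trans
    (Finsupp.comapDomain_mapDomain _ he y)⟩

theorem ker_coordsOn {s : Set ι} (hs : p ≤ span R (v '' s)) :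
    LinearMap.ker (hv.coordsOn p hp he) = (span R (v '' (s \ Set.range e))).comap p.subtype := by
  ext x
  have hxs := (hv.mem_span_image_iff_support_repr_subset (Submodule.inclusion hp x)).1 (hs x.2)
  change _ ↔ ((Submodule.inclusion hp x : span R (Set.range v)) : M)
    ∈ span R (v '' (s \ Set.range e))
  rw [LinearMap.mem_ker, hv.mem_span_image_iff_support_repr_subset, Set.subset_sdiff,
    and_iff_right hxs, Set.disjoint_right, Set.forall_mem_range, Finsupp.ext_iff]
  simp only [Finsupp.coe_zero, Pi.zero_apply, Finset.mem_coe, Finsupp.mem_support_iff, not_not]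
  rfl

end LinearIndependent

namespace RatFunc

variable {K : Type*} [Field K]

theorem X_sub_C_ne_zero (a : K) : (X - C a : K⟮X⟯) ≠ 0 := by
  rw [← algebraMap_X, ← algebraMap_C, ← map_sub]
  exact algebraMap_ne_zero (Polynomial.X_sub_C_ne_zero a)

theorem X_mul_inv_X_sub_C (a : K) : X * (X - C a)⁻¹ = a • (X - C a)⁻¹ + 1 := by
  have := X_sub_C_ne_zero a
  rw [Algebra.smul_def, algebraMap_eq_C]
  field_simp
  ring

variable (K) in
noncomputable def polynomialSubmodule : Submodule K K⟮X⟯ :=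
  Subalgebra.toSubmodule (IsScalarTower.toAlgHom K (Polynomial K) K⟮X⟯).range

theorem inv_X_sub_C_notMem_polynomialSubmodule (a : K) :
    (X - C a)⁻¹ ∉ polynomialSubmodule K := by
  rintro ⟨q, hq⟩
  apply Polynomial.not_isUnit_X_sub_C a
  refine IsUnit.of_mul_eq_one q (algebraMap_injective K ?_)
  rw [map_mul, map_sub, algebraMap_X, algebraMap_C, map_one]
  change algebraMap (Polynomial K) K⟮X⟯ q = _ at hq
  rw [hq, mul_inv_cancel₀ (X_sub_C_ne_zero a)]

variable (K) in
noncomputable def mulXModPolynomials : Module.End K (K⟮X⟯ ⧸ polynomialSubmodule K) :=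
  (polynomialSubmodule K).mapQ (polynomialSubmodule K) (LinearMap.mulLeft K X)
    fun _ hf => Subalgebra.mul_mem _ ((AlgHom.mem_range _).2 ⟨Polynomial.X, algebraMap_X⟩) hf

theorem hasEigenvector_mulXModPolynomials (a : K) :
    (mulXModPolynomials K).HasEigenvector a ((polynomialSubmodule K).mkQ (X - C a)⁻¹) := by
  refine ⟨Module.End.mem_eigenspace_iff.2 ?_, ?_⟩
  · change Submodule.Quotient.mk (X * (X - C a)⁻¹) = _
    rw [X_mul_inv_X_sub_C, Quotient.mk_add, Quotient.mk_smul,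
      (Quotient.mk_eq_zero _ (x := 1)).2 (Subalgebra.one_mem _), add_zero]
    rfl
  · rw [Ne, mkQ_apply, Quotient.mk_eq_zero]
    exact inv_X_sub_C_notMem_polynomialSubmodule a

theorem linearIndependent_mkQ_inv_X_sub_C :
    LinearIndependent K ((polynomialSubmodule K).mkQ ∘ fun a : K => (X - C a)⁻¹) :=
  (mulXModPolynomials K).eigenvectors_linearIndependent' id Function.injective_id _
    hasEigenvector_mulXModPolynomials

variable (K) in
noncomputable def simpleFractions (o : Option K) : K⟮X⟯ :=
  Option.casesOn' o 1 fun a => (X - C a)⁻¹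

theorem linearIndependent_simpleFractions : LinearIndependent K (simpleFractions K) :=
  linearIndependent_mkQ_inv_X_sub_C.of_comp _ |>.option <|
    linearIndependent_mkQ_inv_X_sub_C.notMem_span_of_mkQ (Subalgebra.one_mem _) one_ne_zero

noncomputable def simpleFractionCoeffs (p : Submodule K K⟮X⟯)
    (hp : p ≤ span K (Set.range (simpleFractions K))) (s : Set K) : p →ₗ[K] s →₀ K :=
  linearIndependent_simpleFractions.coordsOn p hp
    ((Option.some_injective K).comp Subtype.val_injective)

variable {p : Submodule K K⟮X⟯} (hp : p ≤ span K (Set.range (simpleFractions K))) (s : Set K)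

theorem simpleFractionCoeffs_inv_X_sub_C {a : K} (ha : (X - C a)⁻¹ ∈ p) (μ : s) :
    simpleFractionCoeffs p hp s ⟨_, ha⟩ μ = Finsupp.single a 1 (μ : K) := by
  rw [simpleFractionCoeffs, LinearIndependent.coordsOn_eq_comapDomain
    (c := Finsupp.single (some a) 1) _ _ _ (by simp [simpleFractions])]
  simp [Finsupp.single_apply_left (Option.some_injective K)]

theorem simpleFractionCoeffs_X_mul_inv_X_sub_C {a : K} (ha : X * (X - C a)⁻¹ ∈ p) (μ : s) :
    simpleFractionCoeffs p hp s ⟨_, ha⟩ μ = Finsupp.single a a (μ : K) := by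
  rw [simpleFractionCoeffs, LinearIndependent.coordsOn_eq_comapDomain
    (c := a • Finsupp.single (some a) 1 + Finsupp.single none 1) _ _ _
    (by simp [simpleFractions, X_mul_inv_X_sub_C])]
  simp [Finsupp.single_apply_left (Option.some_injective K)]

theorem simpleFractionCoeffs_surjective (h : ∀ μ ∈ s, (X - C μ)⁻¹ ∈ p) :
    Function.Surjective (simpleFractionCoeffs p hp s) :=
  LinearIndependent.coordsOn_surjective _ _ _ fun μ => h μ μ.2

theorem ker_simpleFractionCoeffs {t : Set (Option K)} (ht : p ≤ span K (simpleFractions K '' t)) :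
    LinearMap.ker (simpleFractionCoeffs p hp s)
      = (span K (simpleFractions K '' (t \ some '' s))).comap p.subtype := by
  rw [simpleFractionCoeffs, LinearIndependent.ker_coordsOn _ _ _ ht, Set.range_comp,
    Subtype.range_coe]

end RatFunc

open RatFunc (simpleFractions simpleFractionCoeffs)

theorem VI_eq_span_simpleFractions (I : Set k) :
    VI k I = span k (simpleFractions k '' (some '' I)) := by
  rw [Set.image_image]
  rfl

theorem WI_eq_span_simpleFractions (I : Set k) :
    WI k I = span k (simpleFractions k '' insert none (some '' I)) := by
  rw [Set.image_insert_eq, span_insert, ← VI_eq_span_simpleFractions, sup_comm]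
  rfl

theorem VI_mono {J I : Set k} (h : J ⊆ I) : VI k J ≤ VI k I :=
  span_mono (Set.image_mono h)

theorem WI_mono {J I : Set k} (h : J ⊆ I) : WI k J ≤ WI k I :=
  sup_le_sup_right (VI_mono k h) _

theorem VI_le_WI (I : Set k) : VI k I ≤ WI k I := le_sup_left

theorem WI_le_span_simpleFractions (I : Set k) :
    WI k I ≤ span k (Set.range (simpleFractions k)) :=
  (WI_eq_span_simpleFractions k I).le.trans (span_mono (Set.image_subset_range _ _))

theorem VI_le_span_simpleFractions (I : Set k) :
    VI k I ≤ span k (Set.range (simpleFractions k)) :=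
  (VI_le_WI k I).trans (WI_le_span_simpleFractions k I)

noncomputable def Prep.inclusion {J I : Set k} (h : J ⊆ I) : KronHom (Prep k J) (Prep k I) :=
  ⟨Submodule.inclusion (VI_mono k h), Submodule.inclusion (WI_mono k h), rfl, rfl⟩

noncomputable def Prep.toSrep (I s : Set k) : KronHom (Prep k I) (Srep k s) where
  φ := simpleFractionCoeffs (VI k I) (VI_le_span_simpleFractions k I) s
  ψ := simpleFractionCoeffs (WI k I) (WI_le_span_simpleFractions k I) s
  comm_a := rfl
  comm_b := by
    refine LinearMap.ext_on span_span_coe_preimage ?_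
    rintro ⟨_, ha⟩ ⟨a, -, rfl⟩
    refine Finsupp.ext fun μ => (Finsupp.lsum_smul_lsingle_apply _ _ μ).trans ?_
    change _ * simpleFractionCoeffs (VI k I) _ s ⟨_, ha⟩ μ
      = simpleFractionCoeffs (WI k I) _ s
          ⟨RatFunc.X * (RatFunc.X - RatFunc.C a)⁻¹, mulX_mem k I _ ha⟩ μ
    rw [RatFunc.simpleFractionCoeffs_inv_X_sub_C, RatFunc.simpleFractionCoeffs_X_mul_inv_X_sub_C]
    by_cases h : a = μ
    · simp [h]
    · simp [Finsupp.single_eq_of_ne' h]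

theorem Prep.toSrep_φ_surjective {I s : Set k} (h : s ⊆ I) :
    Function.Surjective (Prep.toSrep k I s).φ :=
  RatFunc.simpleFractionCoeffs_surjective _ _ fun μ hμ => subset_span ⟨μ, h hμ, rfl⟩

theorem Prep.toSrep_ψ_surjective {I s : Set k} (h : s ⊆ I) :
    Function.Surjective (Prep.toSrep k I s).ψ :=
  RatFunc.simpleFractionCoeffs_surjective _ _ fun μ hμ =>
    VI_le_WI k I (subset_span ⟨μ, h hμ, rfl⟩)

theorem range_inclusion_VI_eq_ker_simpleFractionCoeffs {I J : Set k} (h : J ⊆ I) :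
    LinearMap.range (Submodule.inclusion (VI_mono k h))
      = LinearMap.ker
          (simpleFractionCoeffs (VI k I) (VI_le_span_simpleFractions k I) (I \ J)) := by
  rw [RatFunc.ker_simpleFractionCoeffs _ _ (VI_eq_span_simpleFractions k I).le,
    Set.image_sdiff_image_sdiff_of_subset (Option.some_injective k) h,
    ← VI_eq_span_simpleFractions]
  exact Submodule.range_inclusion _ _ _

theorem range_inclusion_WI_eq_ker_simpleFractionCoeffs {I J : Set k} (h : J ⊆ I) :
    LinearMap.range (Submodule.inclusion (WI_mono k h))
      = LinearMap.ker
          (simpleFractionCoeffs (WI k I) (WI_le_span_simpleFractions k I) (I \ J)) := by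
  rw [RatFunc.ker_simpleFractionCoeffs _ _ (WI_eq_span_simpleFractions k I).le,
    Set.insert_sdiff_of_notMem _ (by simp),
    Set.image_sdiff_image_sdiff_of_subset (Option.some_injective k) h,
    ← WI_eq_span_simpleFractions]
  exact Submodule.range_inclusion _ _ _

theorem exists_shortExact_PJ_PI_S
    (I J : Set k) (hJI : J ⊆ I) :
    ∃ (f : KronHom (Prep k J) (Prep k I)) (g : KronHom (Prep k I) (Srep k (I \ J))),
      Function.Injective f.φ ∧ Function.Injective f.ψ ∧
      Function.Surjective g.φ ∧ Function.Surjective g.ψ ∧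
      LinearMap.range f.φ = LinearMap.ker g.φ ∧
      LinearMap.range f.ψ = LinearMap.ker g.ψ :=
  ⟨Prep.inclusion k hJI, Prep.toSrep k I (I \ J),
    Submodule.inclusion_injective (VI_mono k hJI), Submodule.inclusion_injective (WI_mono k hJI),
    Prep.toSrep_φ_surjective k Set.sdiff_subset, Prep.toSrep_ψ_surjective k Set.sdiff_subset,
    range_inclusion_VI_eq_ker_simpleFractionCoeffs k hJI,
    range_inclusion_WI_eq_ker_simpleFractionCoeffs k hJI⟩
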